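/- Let A ∈ ℝ^{m×n}, b ∈ ℝ^m and λ > 0. Suppose V_k ∈ ℝ^{n×k} has orthonormal columns whose span equals the Krylov subspace K_k(AᵀA, Aᵀb) = span{Aᵀb, (AᵀA)Aᵀb, …, (AᵀA)^{k−1}Aᵀb} (assumed to have dimension k). Let ŷ ∈ ℝ^k be the unique minimizer of y ↦ ‖b − A V_k y‖₂² + λ‖y‖₂². Then V_k ŷ is the unique minimizer of the Tikhonov functional x ↦ ‖b − A x‖₂² + λ‖x‖₂² over the shifted Krylov subspace K_k(AᵀA + λI_n, Aᵀb) (the subspace over which k steps of conjugate gradient applied to the Tikhonov problem minimize). Thus first-regularize-then-project and first-project-then-regularize produce the same iterate. -/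

import Mathlib

/-!
Since `(AᵀA + λI)^i` is a polynomial of degree `i` in `AᵀA`, shifting by `λI` does not change
the Krylov subspace, so `K_k(AᵀA + λI, Aᵀb)` is the range of `V`. On that range `x = V y`, and
`VᵀV = I` gives `‖V y‖ = ‖y‖`, so the Tikhonov functional at `V y` is the projected functional
at `y`.
-/

open Matrix

/-- The Krylov subspace `K_k(M, v) = span{v, Mv, …, M^{k-1}v}`. -/
def krylov {n : ℕ} (M : Matrix (Fin n) (Fin n) ℝ) (v : Fin n → ℝ) (k : ℕ) :
    Submodule ℝ (Fin n → ℝ) :=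
  Submodule.span ℝ (Set.range fun i : Fin k => (M ^ (i : ℕ)) *ᵥ v)

/-- The standard-form Tikhonov functional `x ↦ ‖b - Ax‖₂² + λ‖x‖₂²`. -/
noncomputable def tik {m n : ℕ} (A : Matrix (Fin m) (Fin n) ℝ) (b : Fin m → ℝ)
    (lam : ℝ) (x : Fin n → ℝ) : ℝ :=
  (∑ i, (b - A *ᵥ x) i ^ 2) + lam * ∑ j, x j ^ 2

lemma add_smul_one_pow_mulVec_eq_sum {ι R : Type*} [Fintype ι] [DecidableEq ι] [CommRing R]
    (M : Matrix ι ι R) (c : R) (v : ι → R) (i : ℕ) :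
    (M + c • 1) ^ i *ᵥ v =
      ∑ j ∈ Finset.range (i + 1), (c ^ (i - j) * i.choose j) • (M ^ j *ᵥ v) := by
  rw [((Commute.one_right M).smul_right c).add_pow, sum_mulVec]
  refine Finset.sum_congr rfl fun j _ => ?_
  simp only [smul_pow, one_pow, ← mulVec_mulVec, natCast_mulVec, smul_mulVec, mulVec_smul,
    one_mulVec, smul_smul, mul_comm]

lemma krylov_add_smul_one_le {n : ℕ} (M : Matrix (Fin n) (Fin n) ℝ) (c : ℝ)
    (v : Fin n → ℝ) (k : ℕ) :
    krylov (M + c • 1) v k ≤ krylov M v k := by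
  rw [krylov, Submodule.span_le, Set.range_subset_iff]
  intro i
  rw [SetLike.mem_coe, add_smul_one_pow_mulVec_eq_sum]
  refine Submodule.sum_mem _ fun j hj => Submodule.smul_mem _ _ (Submodule.subset_span ?_)
  exact ⟨⟨j, by have := Finset.mem_range.mp hj; omega⟩, rfl⟩

lemma krylov_add_smul_one {n : ℕ} (M : Matrix (Fin n) (Fin n) ℝ) (c : ℝ)
    (v : Fin n → ℝ) (k : ℕ) :
    krylov (M + c • 1) v k = krylov M v k := by
  refine (krylov_add_smul_one_le M c v k).antisymm ?_
  have h := krylov_add_smul_one_le (M + c • 1) (-c) v k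
  rwa [add_assoc, ← add_smul, add_neg_cancel, zero_smul, add_zero] at h

lemma sum_sq_mulVec_of_transpose_mul_self_eq_one {ι κ R : Type*} [Fintype ι] [Fintype κ]
    [DecidableEq κ] [CommRing R] {V : Matrix ι κ R} (hV : Vᵀ * V = 1) (y : κ → R) :
    ∑ j, (V *ᵥ y) j ^ 2 = ∑ j, y j ^ 2 := by
  simpa only [dotProduct, sq] using show (V *ᵥ y) ⬝ᵥ (V *ᵥ y) = y ⬝ᵥ y by
    rw [dotProduct_mulVec, ← mulVec_transpose, mulVec_mulVec, hV, one_mulVec]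

lemma tik_mulVec_of_transpose_mul_self_eq_one {m n k : ℕ} (A : Matrix (Fin m) (Fin n) ℝ)
    (b : Fin m → ℝ) (lam : ℝ) {V : Matrix (Fin n) (Fin k) ℝ} (hV : Vᵀ * V = 1)
    (y : Fin k → ℝ) :
    tik A b lam (V *ᵥ y) = tik (A * V) b lam y := by
  rw [tik, tik, mulVec_mulVec, sum_sq_mulVec_of_transpose_mul_self_eq_one hV]

theorem project_then_regularize_eq_regularize_then_project_general
    {m n k : ℕ}
    (A : Matrix (Fin m) (Fin n) ℝ) (b : Fin m → ℝ) (lam : ℝ)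
    (V : Matrix (Fin n) (Fin k) ℝ)
    (hV : Vᵀ * V = 1)
    (hspan : LinearMap.range V.mulVecLin = krylov (Aᵀ * A) (Aᵀ *ᵥ b) k)
    (yhat : Fin k → ℝ)
    (hyhat : ∀ y : Fin k → ℝ, y ≠ yhat →
      (∑ i, (b - A *ᵥ (V *ᵥ yhat)) i ^ 2) + lam * ∑ j, yhat j ^ 2 <
      (∑ i, (b - A *ᵥ (V *ᵥ y)) i ^ 2) + lam * ∑ j, y j ^ 2) :
    V *ᵥ yhat ∈ krylov (Aᵀ * A + lam • (1 : Matrix (Fin n) (Fin n) ℝ)) (Aᵀ *ᵥ b) k ∧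
    ∀ x ∈ krylov (Aᵀ * A + lam • (1 : Matrix (Fin n) (Fin n) ℝ)) (Aᵀ *ᵥ b) k,
      x ≠ V *ᵥ yhat → tik A b lam (V *ᵥ yhat) < tik A b lam x := by
  rw [krylov_add_smul_one, ← hspan]
  refine ⟨⟨yhat, rfl⟩, ?_⟩
  rintro _ ⟨y, rfl⟩ hne
  have hy : y ≠ yhat := fun h => hne (congrArg V.mulVecLin h)
  rw [mulVecLin_apply, tik_mulVec_of_transpose_mul_self_eq_one A b lam hV,
    tik_mulVec_of_transpose_mul_self_eq_one A b lam hV]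
  simpa only [tik, mulVec_mulVec] using hyhat y hy

/-- First-regularize-then-project equals first-project-then-regularize:
if the columns of `V` form an orthonormal basis of the Krylov subspace
`K_k(AᵀA, Aᵀb)` (of dimension `k`) and `ŷ` is the unique minimizer of the
projected Tikhonov problem, then `V ŷ` is the unique minimizer of the
Tikhonov functional over the shifted Krylov subspace `K_k(AᵀA + λI, Aᵀb)`. -/
theorem project_then_regularize_eq_regularize_then_project
    {m n k : ℕ}
    (A : Matrix (Fin m) (Fin n) ℝ) (b : Fin m → ℝ) (lam : ℝ) (hlam : 0 < lam)
    (V : Matrix (Fin n) (Fin k) ℝ)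
    (hV : Vᵀ * V = 1)
    (hspan : LinearMap.range V.mulVecLin = krylov (Aᵀ * A) (Aᵀ *ᵥ b) k)
    (hdim : Module.finrank ℝ (krylov (Aᵀ * A) (Aᵀ *ᵥ b) k) = k)
    (yhat : Fin k → ℝ)
    (hyhat : ∀ y : Fin k → ℝ, y ≠ yhat →
      (∑ i, (b - A *ᵥ (V *ᵥ yhat)) i ^ 2) + lam * ∑ j, yhat j ^ 2 <
      (∑ i, (b - A *ᵥ (V *ᵥ y)) i ^ 2) + lam * ∑ j, y j ^ 2) :
    V *ᵥ yhat ∈ krylov (Aᵀ * A + lam • (1 : Matrix (Fin n) (Fin n) ℝ)) (Aᵀ *ᵥ b) k ∧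
    ∀ x ∈ krylov (Aᵀ * A + lam • (1 : Matrix (Fin n) (Fin n) ℝ)) (Aᵀ *ᵥ b) k,
      x ≠ V *ᵥ yhat → tik A b lam (V *ᵥ yhat) < tik A b lam x :=
  project_then_regularize_eq_regularize_then_project_general A b lam V hV hspan yhat hyhat
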